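/- arXiv:0912.5220 — 2 statements merged into one kernel-verified Lean document; each statement's English description precedes it below -/
import Mathlib

section
/- Suppose p is a-hyperbolic with Gårding cone Γ, and let E = closure(Γ) ∩ (−closure(Γ)) be the edge of Γ. Then the following four sets coincide: (i) E; (ii) the null set of p, {x ∈ ℝⁿ : all a-eigenvalues of x vanish, i.e. p(t·a + x) = p(a)·tᵐ for all t}; (iii) the linearity set of p, {x ∈ ℝⁿ : p(b + t·x) = p(b) for all t ∈ ℝ and all b ∈ ℝⁿ}; (iv) {x ∈ ℝⁿ : the directional derivative p′_x vanishes identically, i.e. (d/ds) p(y + s·x)|_{s=0} = 0 for all y ∈ ℝⁿ}. -/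
open MvPolynomial

/-- `lam : Fin m → ℝ` is a tuple of `a`-eigenvalues of `x` for the polynomial `p`:
`p(t·a + x) = p(a)·∏ₖ (t + lamₖ)` for all real `t`. -/
def IsEigen {n : ℕ} (m : ℕ) (p : MvPolynomial (Fin n) ℝ) (a x : Fin n → ℝ)
    (lam : Fin m → ℝ) : Prop :=
  ∀ t : ℝ, eval (t • a + x) p = eval a p * ∏ k, (t + lam k)

/-- `p` is `a`-hyperbolic (of degree `m`): `p(a) > 0` and every `x` has `m` real
`a`-eigenvalues. -/
def IsHyperbolic {n : ℕ} (m : ℕ) (p : MvPolynomial (Fin n) ℝ) (a : Fin n → ℝ) : Prop :=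
  0 < eval a p ∧ ∀ x : Fin n → ℝ, ∃ lam : Fin m → ℝ, IsEigen m p a x lam

/-- The open Gårding cone: the set of `x` all of whose `a`-eigenvalues are positive. -/
def GardingCone {n : ℕ} (m : ℕ) (p : MvPolynomial (Fin n) ℝ) (a : Fin n → ℝ) :
    Set (Fin n → ℝ) :=
  {x | ∃ lam : Fin m → ℝ, IsEigen m p a x lam ∧ ∀ k, 0 < lam k}

-- The ordered (non-decreasing) arrangement `λ↑` of the `a`-eigenvalues of `x`
-- (defined via choice; for a hyperbolic `p` the monotone arrangement exists and is unique).
open scoped Classical in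
noncomputable def ordEig {n : ℕ} (m : ℕ) (p : MvPolynomial (Fin n) ℝ) (a x : Fin n → ℝ) :
    Fin m → ℝ :=
  if h : ∃ lam : Fin m → ℝ, Monotone lam ∧ IsEigen m p a x lam then h.choose
  else fun _ => 0

/-- The directional derivative `p'_b(a) = (d/ds) p(a + s·b) |_{s=0}`. -/
noncomputable def dirDeriv {n : ℕ} (p : MvPolynomial (Fin n) ℝ) (a b : Fin n → ℝ) : ℝ :=
  deriv (fun s : ℝ => eval (a + s • b) p) 0

/-!
Write the eigenvalue identity as `p (a + s • z) = p a * ∏ₖ (1 + s μₖ(z))`. Comparing the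
coefficients of `s` and `s²` gives `p a * ∑ μₖ = ∂_z p (a)` and
`(p a)² ∑ μₖ² = (∂_z p (a))² - p a * ∂_z² p (a)`, a polynomial of degree two in `z`.
If `x` has only zero eigenvalues, then `∂_x p (a) = ∂_x² p (a) = 0`, so `∑ μₖ(y + v • x)²` is a
nonnegative affine function of `v`, hence constant. The eigenvalues of `y + v • x` therefore stay
bounded, and so does the polynomial `v ↦ p (y + v • x) = p a * ∏ₖ μₖ(y + v • x)`, which must then
be constant: null vectors lie in the lineality space.

On the closure of `Γ` we have `p (a + s • z) ≥ p a` for `s ≥ 0`. For `x` in the edge this gives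
`∏ₖ (1 + s μₖ(x)) ≥ 1` for every real `s`, and multiplying the products at `s` and `-s` for small
`s` forces `μ(x) = 0`. Conversely, `x + ε • a ∈ Γ` for a null vector `x` and every `ε > 0`.
-/

namespace MvPolynomial

variable {σ R : Type*} [CommSemiring R]

theorem IsHomogeneous.eval_smul {φ : MvPolynomial σ R} {m : ℕ} (hφ : φ.IsHomogeneous m)
    (c : R) (x : σ → R) : eval (c • x) φ = c ^ m * eval x φ := by
  rw [eval_eq, eval_eq, Finset.mul_sum]
  refine Finset.sum_congr rfl fun d hd => ?_
  have hdeg : ∑ i ∈ d.support, d i = m := hφ.degree_eq_sum_deg_support hd ▸ rfl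
  simp only [Pi.smul_apply, smul_eq_mul, mul_pow, Finset.prod_mul_distrib,
    Finset.prod_pow_eq_pow_sum, hdeg]
  ring

noncomputable def restrictLine (p : MvPolynomial σ R) (b z : σ → R) : Polynomial R :=
  aeval (fun i => Polynomial.C (b i) + Polynomial.C (z i) * Polynomial.X) p

theorem eval_restrictLine (p : MvPolynomial σ R) (b z : σ → R) (s : R) :
    (p.restrictLine b z).eval s = eval (b + s • z) p := by
  induction p using MvPolynomial.induction_on with
  | C c => simp [restrictLine]
  | add p q hp hq => simp_all [restrictLine]
  | mul_X p i hp =>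
    rw [restrictLine, map_mul, Polynomial.eval_mul, ← restrictLine, hp, map_mul, aeval_X]
    simp only [Polynomial.eval_add, Polynomial.eval_mul, Polynomial.eval_C, Polynomial.eval_X,
      eval_X, Pi.add_apply, Pi.smul_apply, smul_eq_mul]
    ring

theorem coeff_zero_restrictLine (p : MvPolynomial σ R) (b z : σ → R) :
    (p.restrictLine b z).coeff 0 = eval b p := by
  rw [Polynomial.coeff_zero_eq_eval_zero, eval_restrictLine, zero_smul, add_zero]

variable [Fintype σ]

noncomputable def dirPDeriv (z : σ → R) : Derivation R (MvPolynomial σ R) (MvPolynomial σ R) :=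
  ∑ i, z i • pderiv i

theorem dirPDeriv_apply (z : σ → R) (p : MvPolynomial σ R) :
    dirPDeriv z p = ∑ i, z i • pderiv i p := by
  rw [dirPDeriv, ← Derivation.coeFnAddMonoidHom_apply, map_sum, Finset.sum_apply]
  rfl

theorem dirPDeriv_X (z : σ → R) (i : σ) : dirPDeriv z (X i) = C (z i) := by
  classical
  simp [dirPDeriv_apply, pderiv_X, Pi.single_apply, smul_eq_C_mul]

theorem dirPDeriv_add_smul (y x : σ → R) (u : R) :
    dirPDeriv (y + u • x) = dirPDeriv y + u • dirPDeriv x := by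
  simp [dirPDeriv, add_smul, Finset.sum_add_distrib, Finset.smul_sum, smul_smul]

theorem derivative_restrictLine (p : MvPolynomial σ R) (b z : σ → R) :
    Polynomial.derivative (p.restrictLine b z) = (dirPDeriv z p).restrictLine b z := by
  induction p using MvPolynomial.induction_on with
  | C c => simp [restrictLine]
  | add p q hp hq => simp_all [restrictLine]
  | mul_X p i hp =>
    simp only [restrictLine] at *
    simp only [map_mul, map_add, aeval_X, algHom_C, Polynomial.algebraMap_eq, hp,
      Polynomial.derivative_mul, Polynomial.derivative_C, Polynomial.derivative_X, zero_mul,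
      mul_one, zero_add, Derivation.leibniz, dirPDeriv_X, smul_eq_mul]
    ring

theorem coeff_one_restrictLine (p : MvPolynomial σ R) (b z : σ → R) :
    (p.restrictLine b z).coeff 1 = eval b (dirPDeriv z p) := by
  have h := congrArg (Polynomial.coeff · 0) (derivative_restrictLine p b z)
  simpa [Polynomial.coeff_derivative, coeff_zero_restrictLine] using h

theorem two_mul_coeff_two_restrictLine (p : MvPolynomial σ R) (b z : σ → R) :
    2 * (p.restrictLine b z).coeff 2 = eval b (dirPDeriv z (dirPDeriv z p)) := by
  rw [← coeff_zero_restrictLine, ← derivative_restrictLine, ← derivative_restrictLine,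
    Polynomial.coeff_derivative, Polynomial.coeff_derivative]
  norm_num
  ring

end MvPolynomial

namespace Polynomial

variable {ι R : Type*} [CommRing R] (s : Finset ι) (r : ι → R)

theorem coeff_succ_one_add_C_mul_X_mul (c : R) (P : R[X]) (j : ℕ) :
    ((1 + C c * X) * P).coeff (j + 1) = P.coeff (j + 1) + c * P.coeff j := by
  rw [add_mul, one_mul, mul_assoc, coeff_add, coeff_C_mul, coeff_X_mul]

theorem coeff_zero_prod_one_add_C_mul_X : (∏ k ∈ s, (1 + C (r k) * X)).coeff 0 = 1 := by
  simp [coeff_zero_eq_eval_zero, eval_prod]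

theorem coeff_one_prod_one_add_C_mul_X :
    (∏ k ∈ s, (1 + C (r k) * X)).coeff 1 = ∑ k ∈ s, r k := by
  classical
  induction s using Finset.induction_on with
  | empty => simp [coeff_one]
  | insert k s hk ih =>
    rw [Finset.prod_insert hk, Finset.sum_insert hk, coeff_succ_one_add_C_mul_X_mul, ih,
      coeff_zero_prod_one_add_C_mul_X, mul_one, add_comm]

theorem sq_coeff_one_sub_two_mul_coeff_two_prod_one_add_C_mul_X :
    (∏ k ∈ s, (1 + C (r k) * X)).coeff 1 ^ 2 - 2 * (∏ k ∈ s, (1 + C (r k) * X)).coeff 2 =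
      ∑ k ∈ s, r k ^ 2 := by
  classical
  induction s using Finset.induction_on with
  | empty => simp [coeff_one]
  | insert k s hk ih =>
    rw [Finset.prod_insert hk, Finset.sum_insert hk, coeff_succ_one_add_C_mul_X_mul,
      coeff_succ_one_add_C_mul_X_mul, ← ih, coeff_zero_prod_one_add_C_mul_X]
    ring

end Polynomial

theorem Finset.prod_sq_le_sum_sq_pow {ι : Type*} (s : Finset ι) (r : ι → ℝ) :
    (∏ k ∈ s, r k) ^ 2 ≤ (∑ k ∈ s, r k ^ 2) ^ s.card := by
  rw [← Finset.prod_pow, ← Finset.prod_const]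
  exact Finset.prod_le_prod (fun k _ => sq_nonneg _)
    fun k hk => Finset.single_le_sum (fun j _ => sq_nonneg (r j)) hk

theorem eq_zero_of_forall_nonneg_add_mul {α β : ℝ} (h : ∀ u, 0 ≤ α + β * u) : β = 0 := by
  by_contra hβ
  have := h (-(|α| + 1) / β)
  rw [mul_div_cancel₀ _ hβ] at this
  linarith [le_abs_self α]

theorem eq_zero_of_forall_one_le_prod_one_add_mul {ι : Type*} [Fintype ι] {r : ι → ℝ}
    (h : ∀ s, 1 ≤ ∏ k, (1 + s * r k)) (j : ι) : r j = 0 := by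
  classical
  by_contra hj
  have hM : 0 < 1 + ∑ k, |r k| := by positivity
  -- small enough that every factor `1 - (s * r k) ^ 2` below lies in `[0, 1]`
  set s := (1 + ∑ k, |r k|)⁻¹
  have hsr : ∀ k, (s * r k) ^ 2 ≤ 1 := fun k => by
    rw [sq_le_one_iff_abs_le_one, abs_mul, abs_of_pos (inv_pos.2 hM), inv_mul_le_iff₀ hM]
    linarith [Finset.single_le_sum (fun k _ => abs_nonneg (r k)) (Finset.mem_univ k)]
  have hsrj : 0 < (s * r j) ^ 2 := by positivity
  have : (1 : ℝ) < 1 :=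
    calc (1 : ℝ) ≤ (∏ k, (1 + s * r k)) * ∏ k, (1 + -s * r k) :=
          one_le_mul_of_one_le_of_one_le (h s) (h (-s))
      _ = ∏ k, (1 - (s * r k) ^ 2) := by
        rw [← Finset.prod_mul_distrib]
        exact Finset.prod_congr rfl fun k _ => by ring
      _ = (1 - (s * r j) ^ 2) * ∏ k ∈ Finset.univ.erase j, (1 - (s * r k) ^ 2) :=
        (Finset.mul_prod_erase _ _ (Finset.mem_univ j)).symm
      _ ≤ 1 - (s * r j) ^ 2 := mul_le_of_le_one_right (by linarith [hsr j])
        (Finset.prod_le_one (fun k _ => by linarith [hsr k])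
          fun k _ => by linarith [sq_nonneg (s * r k)])
      _ < 1 := by linarith
  exact lt_irrefl _ this

section Hyperbolic

variable {n m : ℕ} {p : MvPolynomial (Fin n) ℝ} {a x z : Fin n → ℝ} {μ : Fin m → ℝ}

theorem isEigen_zero_iff :
    IsEigen m p a x 0 ↔ ∀ t : ℝ, eval (t • a + x) p = eval a p * t ^ m := by
  simp [IsEigen]

theorem IsEigen.eval_add_smul (hp : p.IsHomogeneous m) (h : IsEigen m p a z μ) (s : ℝ) :
    eval (a + s • z) p = eval a p * ∏ k, (1 + s * μ k) := by
  rcases eq_or_ne s 0 with rfl | hs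
  · simp
  have hv : a + s • z = s • (s⁻¹ • a + z) := by
    rw [smul_add, smul_smul, mul_inv_cancel₀ hs, one_smul]
  have hpow : s ^ m = ∏ _k : Fin m, s := by simp
  rw [hv, hp.eval_smul, h, hpow, mul_left_comm, ← Finset.prod_mul_distrib]
  congr 2 with k
  field_simp

theorem IsEigen.eval_eq (h : IsEigen m p a z μ) : eval z p = eval a p * ∏ k, μ k := by
  simpa using h 0

theorem IsEigen.restrictLine_eq (hp : p.IsHomogeneous m) (h : IsEigen m p a z μ) :
    p.restrictLine a z =
      Polynomial.C (eval a p) * ∏ k, (1 + Polynomial.C (μ k) * Polynomial.X) := by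
  refine Polynomial.funext fun s => ?_
  simp only [eval_restrictLine, h.eval_add_smul hp, Polynomial.eval_mul, Polynomial.eval_C,
    Polynomial.eval_prod, Polynomial.eval_add, Polynomial.eval_one, Polynomial.eval_X]
  simp_rw [mul_comm (μ _)]

theorem IsEigen.eval_dirPDeriv (hp : p.IsHomogeneous m) (h : IsEigen m p a z μ) :
    eval a (dirPDeriv z p) = eval a p * ∑ k, μ k := by
  rw [← coeff_one_restrictLine, h.restrictLine_eq hp, Polynomial.coeff_C_mul,
    Polynomial.coeff_one_prod_one_add_C_mul_X]

theorem IsEigen.sum_sq (hp : p.IsHomogeneous m) (h : IsEigen m p a z μ) :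
    eval a p ^ 2 * ∑ k, μ k ^ 2 =
      eval a (dirPDeriv z p) ^ 2 - eval a p * eval a (dirPDeriv z (dirPDeriv z p)) := by
  rw [← coeff_one_restrictLine, ← two_mul_coeff_two_restrictLine, h.restrictLine_eq hp,
    Polynomial.coeff_C_mul, Polynomial.coeff_C_mul,
    ← Polynomial.sq_coeff_one_sub_two_mul_coeff_two_prod_one_add_C_mul_X]
  ring

theorem le_eval_add_smul_of_mem_closure_gardingCone (hp : p.IsHomogeneous m)
    (hpa : 0 < eval a p) (hz : z ∈ closure (GardingCone m p a)) {s : ℝ} (hs : 0 ≤ s) :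
    eval a p ≤ eval (a + s • z) p := by
  have hcone : GardingCone m p a ⊆ {w | eval a p ≤ eval (a + s • w) p} := by
    rintro w ⟨lam, hlam, hpos⟩
    rw [Set.mem_ofPred_eq, hlam.eval_add_smul hp]
    exact le_mul_of_one_le_right hpa.le
      (Finset.one_le_prod fun k _ => le_add_of_nonneg_right (mul_nonneg hs (hpos k).le))
  exact closure_minimal hcone
    (isClosed_le continuous_const ((continuous_eval p).comp (by fun_prop))) hz

theorem isEigen_zero_of_mem_closure_gardingCone_of_neg_mem (hp : p.IsHomogeneous m)
    (hhyp : IsHyperbolic m p a) (hx : x ∈ closure (GardingCone m p a))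
    (hnx : -x ∈ closure (GardingCone m p a)) : IsEigen m p a x 0 := by
  obtain ⟨hpa, hexists⟩ := hhyp
  obtain ⟨lam, hlam⟩ := hexists x
  have hmin : ∀ s : ℝ, eval a p ≤ eval (a + s • x) p := fun s => by
    rcases le_total 0 s with hs | hs
    · exact le_eval_add_smul_of_mem_closure_gardingCone hp hpa hx hs
    · simpa using le_eval_add_smul_of_mem_closure_gardingCone hp hpa hnx (neg_nonneg.2 hs)
  have hzero : lam = 0 := funext <| eq_zero_of_forall_one_le_prod_one_add_mul fun s => by
    have := hmin s
    rw [hlam.eval_add_smul hp] at this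
    exact one_le_of_le_mul_left₀ hpa (by simpa using this)
  exact hzero ▸ hlam

theorem mem_closure_gardingCone_of_isEigen_zero (hx : IsEigen m p a x 0) :
    x ∈ closure (GardingCone m p a) := by
  have hshift : Set.MapsTo (fun ε : ℝ => x + ε • a) (Set.Ioi 0) (GardingCone m p a) :=
    fun ε hε => ⟨fun _ => ε, fun t => by
      rw [show t • a + (x + ε • a) = (t + ε) • a + x by module, isEigen_zero_iff.1 hx]
      simp, fun _ => hε⟩
  simpa using map_mem_closure (by fun_prop) (by simp : (0 : ℝ) ∈ closure (Set.Ioi 0)) hshift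

theorem sum_sq_eigen_add_smul_eq (hp : p.IsHomogeneous m) (hpa : 0 < eval a p)
    (hx : IsEigen m p a x 0) {y : Fin n → ℝ} {μ : ℝ → Fin m → ℝ}
    (hμ : ∀ v, IsEigen m p a (y + v • x) (μ v)) (v : ℝ) :
    ∑ k, μ v k ^ 2 = ∑ k, μ 0 k ^ 2 := by
  have hDx : eval a (dirPDeriv x p) = 0 := by simpa using hx.eval_dirPDeriv hp
  have hDDx : eval a (dirPDeriv x (dirPDeriv x p)) = 0 := by
    simpa [hDx, hpa.ne'] using hx.sum_sq hp
  set B := eval a (dirPDeriv y (dirPDeriv x p)) + eval a (dirPDeriv x (dirPDeriv y p))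
  have hsq : ∀ v, eval a p ^ 2 * ∑ k, μ v k ^ 2 =
      eval a p ^ 2 * ∑ k, μ 0 k ^ 2 - eval a p * B * v := fun v => by
    rw [(hμ v).sum_sq hp, (hμ 0).sum_sq hp, dirPDeriv_add_smul, dirPDeriv_add_smul]
    simp only [Derivation.add_apply, Derivation.smul_apply, map_add, Derivation.map_smul,
      smul_eval, hDx, hDDx, zero_smul, add_zero, B]
    ring
  have hB : eval a p * B = 0 := by
    refine neg_eq_zero.1 (eq_zero_of_forall_nonneg_add_mul
      (α := eval a p ^ 2 * ∑ k, μ 0 k ^ 2) fun v => ?_)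
    nlinarith [hsq v, Finset.sum_nonneg fun k (_ : k ∈ Finset.univ) => sq_nonneg (μ v k)]
  have := hsq v
  rw [hB, zero_mul, sub_zero] at this
  exact mul_left_cancel₀ (pow_ne_zero 2 hpa.ne') this

theorem eval_add_smul_eq_of_isEigen_zero (hp : p.IsHomogeneous m) (hhyp : IsHyperbolic m p a)
    (hx : IsEigen m p a x 0) (y : Fin n → ℝ) (u : ℝ) : eval (y + u • x) p = eval y p := by
  obtain ⟨hpa, hexists⟩ := hhyp
  choose μ hμ using fun v : ℝ => hexists (y + v • x)
  have hbound : ∀ v, |(p.restrictLine y x).eval v| ≤ √(eval a p ^ 2 * (∑ k, μ 0 k ^ 2) ^ m) :=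
    fun v => Real.abs_le_sqrt <| by
      have := Finset.prod_sq_le_sum_sq_pow Finset.univ (μ v)
      rw [Finset.card_univ, Fintype.card_fin, sum_sq_eigen_add_smul_eq hp hpa hx hμ v] at this
      rw [eval_restrictLine, (hμ v).eval_eq, mul_pow]
      exact mul_le_mul_of_nonneg_left this (sq_nonneg _)
  have hconst := Polynomial.eq_C_of_degree_le_zero
    ((Polynomial.isBoundedUnder_abs_atTop_iff _).1 (Filter.isBoundedUnder_of ⟨_, hbound⟩))
  rw [← eval_restrictLine, hconst, Polynomial.eval_C, coeff_zero_restrictLine]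

theorem isEigen_zero_of_forall_eval_add_smul_eq (hp : p.IsHomogeneous m)
    (hx : ∀ (t : ℝ) (b : Fin n → ℝ), eval (b + t • x) p = eval b p) : IsEigen m p a x 0 :=
  isEigen_zero_iff.2 fun t => by rw [← one_smul ℝ x, hx, hp.eval_smul, mul_comm]

end Hyperbolic

section Deriv

variable {σ : Type*} [Fintype σ] (p : MvPolynomial σ ℝ)

theorem deriv_eval_add_smul (y x : σ → ℝ) (c : ℝ) :
    deriv (fun s : ℝ => eval (y + s • x) p) c = eval (y + c • x) (dirPDeriv x p) := by
  simp_rw [← eval_restrictLine, Polynomial.deriv, derivative_restrictLine]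

theorem forall_eval_add_smul_eq_iff_forall_deriv_eq_zero {x : σ → ℝ} :
    (∀ (t : ℝ) (b : σ → ℝ), eval (b + t • x) p = eval b p) ↔
      ∀ y : σ → ℝ, deriv (fun s : ℝ => eval (y + s • x) p) 0 = 0 := by
  refine ⟨fun h y => by simp_rw [h _ y, deriv_const], fun h t b => ?_⟩
  have hD : ∀ c, deriv (fun s : ℝ => eval (b + s • x) p) c = 0 := fun c => by
    simpa [deriv_eval_add_smul] using h (b + c • x)
  simp_rw [← eval_restrictLine] at hD
  simpa [eval_restrictLine] using
    is_const_of_deriv_eq_zero (Polynomial.differentiable _) hD t 0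

end Deriv

theorem edge_characterizations_general
    {n m : ℕ} (p : MvPolynomial (Fin n) ℝ) (hp : p.IsHomogeneous m)
    (a : Fin n → ℝ) (hhyp : IsHyperbolic m p a) :
    closure (GardingCone m p a) ∩ (-closure (GardingCone m p a)) =
      {x : Fin n → ℝ | ∀ t : ℝ, eval (t • a + x) p = eval a p * t ^ m} ∧
    closure (GardingCone m p a) ∩ (-closure (GardingCone m p a)) =
      {x : Fin n → ℝ | ∀ t : ℝ, ∀ b : Fin n → ℝ, eval (b + t • x) p = eval b p} ∧
    closure (GardingCone m p a) ∩ (-closure (GardingCone m p a)) =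
      {x : Fin n → ℝ | ∀ y : Fin n → ℝ, deriv (fun s : ℝ => eval (y + s • x) p) 0 = 0} := by
  have hNL : ∀ x, IsEigen m p a x 0 ↔ ∀ (t : ℝ) (b : Fin n → ℝ), eval (b + t • x) p = eval b p :=
    fun x => ⟨fun hx t b => eval_add_smul_eq_of_isEigen_zero hp hhyp hx b t,
      isEigen_zero_of_forall_eval_add_smul_eq hp⟩
  have hEN : ∀ x, x ∈ closure (GardingCone m p a) ∩ (-closure (GardingCone m p a)) ↔
      IsEigen m p a x 0 := fun x =>
    ⟨fun ⟨hx, hnx⟩ => isEigen_zero_of_mem_closure_gardingCone_of_neg_mem hp hhyp hx hnx,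
      fun hx => ⟨mem_closure_gardingCone_of_isEigen_zero hx,
        mem_closure_gardingCone_of_isEigen_zero <| (hNL _).2 fun t b => by
          simpa using (hNL x).1 hx (-t) b⟩⟩
  refine ⟨?_, ?_, ?_⟩ <;> ext x <;>
    simp only [hEN, Set.mem_ofPred_eq, ← isEigen_zero_iff, hNL,
      forall_eval_add_smul_eq_iff_forall_deriv_eq_zero p]

/-- the edge `E = closure Γ ∩ (−closure Γ)` equals the null set of `p`,
the linearity set of `p`, and the set of directions in which the derivative of `p`
vanishes identically. -/
theorem edge_characterizations
    {n m : ℕ} (hm : 1 ≤ m) (p : MvPolynomial (Fin n) ℝ) (hp : p.IsHomogeneous m)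
    (a : Fin n → ℝ) (hhyp : IsHyperbolic m p a) :
    closure (GardingCone m p a) ∩ (-closure (GardingCone m p a)) =
      {x : Fin n → ℝ | ∀ t : ℝ, eval (t • a + x) p = eval a p * t ^ m} ∧
    closure (GardingCone m p a) ∩ (-closure (GardingCone m p a)) =
      {x : Fin n → ℝ | ∀ t : ℝ, ∀ b : Fin n → ℝ, eval (b + t • x) p = eval b p} ∧
    closure (GardingCone m p a) ∩ (-closure (GardingCone m p a)) =
      {x : Fin n → ℝ | ∀ y : Fin n → ℝ, deriv (fun s : ℝ => eval (y + s • x) p) 0 = 0} :=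
  edge_characterizations_general p hp a hhyp
end

section
/- Gårding's inequality: Suppose p is a-hyperbolic of degree m with Gårding cone Γ, and let b ∈ Γ. Then p(b) = inf_{t>0} p(a + t·b)/tᵐ and p(b) ≤ p(a)^{1−m} · ((1/m)·p′_b(a))ᵐ, where p′_b(a) = (d/ds) p(a + s·b)|_{s=0}. Equality holds in the second inequality if and only if all the a-eigenvalues of b are equal. -/
/-!
Homogeneity turns the eigenvalue identity into `p(a + t•b) = p(a) ∏ₖ (1 + t λₖ)` with
`λₖ > 0` the eigenvalues of `b`. Hence `p(a + t•b) / tᵐ = p(a) ∏ₖ (t⁻¹ + λₖ)` decreases to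
`p(a) ∏ₖ λₖ = p(b)` as `t → ∞`, and `p′_b(a) = p(a) ∑ₖ λₖ`, so the inequality and its equality
case are AM–GM for the `λₖ`. Any two eigenvalue tuples of `b` take values in each other, being
the negated roots of the same polynomial in `t`, so "all equal" does not depend on the tuple.
-/

open MvPolynomial

open Finset Filter Topology

theorem MvPolynomial.IsHomogeneous.eval_smul_s16 {σ R : Type*} [CommSemiring R] {m : ℕ}
    {p : MvPolynomial σ R} (hp : p.IsHomogeneous m) (c : R) (x : σ → R) :
    eval (c • x) p = c ^ m * eval x p := by
  rw [eval_eq, eval_eq, mul_sum]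
  refine sum_congr rfl fun d hd => ?_
  have hdeg : ∑ i ∈ d.support, d i = m := by
    simpa [Finsupp.weight_apply, Finsupp.sum] using hp (mem_support_iff.mp hd)
  simp only [Pi.smul_apply, smul_eq_mul, mul_pow, prod_mul_distrib, prod_pow_eq_pow_sum, hdeg]
  ring

section MeanInequality

variable {ι : Type*} (s : Finset ι) {z : ι → ℝ}

theorem prod_rpow_inv_card_pow (hz : ∀ i ∈ s, 0 ≤ z i) :
    (∏ i ∈ s, z i ^ (#s : ℝ)⁻¹) ^ #s = ∏ i ∈ s, z i := by
  rw [← prod_pow]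
  exact prod_congr rfl fun i hi => Real.rpow_inv_natCast_pow (hz i hi) (card_ne_zero_of_mem hi)

theorem prod_le_mean_pow_card (hz : ∀ i ∈ s, 0 ≤ z i) :
    ∏ i ∈ s, z i ≤ ((∑ i ∈ s, z i) / #s) ^ #s := by
  rcases s.eq_empty_or_nonempty with rfl | hs
  · simp
  have hamgm := Real.geom_mean_le_arith_mean_weighted s (fun _ => (#s : ℝ)⁻¹) z
    (fun _ _ => by positivity) (by simp [hs.card_ne_zero]) hz
  rw [← mul_sum, inv_mul_eq_div] at hamgm
  rw [← prod_rpow_inv_card_pow s hz]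
  gcongr
  exact prod_nonneg fun i hi => Real.rpow_nonneg (hz i hi) _

theorem prod_eq_mean_pow_card_iff (hz : ∀ i ∈ s, 0 ≤ z i) :
    ∏ i ∈ s, z i = ((∑ i ∈ s, z i) / #s) ^ #s ↔ ∀ j ∈ s, ∀ k ∈ s, z j = z k := by
  rcases s.eq_empty_or_nonempty with rfl | hs
  · simp
  have hamgm := Real.geom_mean_eq_arith_mean_weighted_iff_of_pos s (fun _ => (#s : ℝ)⁻¹) z
    (fun _ _ => by positivity) (by simp [hs.card_ne_zero]) hz
  rw [← mul_sum, inv_mul_eq_div] at hamgm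
  rw [← prod_rpow_inv_card_pow s hz, pow_left_inj₀ _ _ hs.card_ne_zero, hamgm]
  · exact prod_nonneg fun i hi => Real.rpow_nonneg (hz i hi) _
  · exact div_nonneg (sum_nonneg hz) (Nat.cast_nonneg _)

end MeanInequality

theorem isGLB_image_prod_inv_add {ι : Type*} (s : Finset ι) {z : ι → ℝ}
    (hz : ∀ i ∈ s, 0 ≤ z i) :
    IsGLB ((fun t : ℝ => ∏ i ∈ s, (t⁻¹ + z i)) '' Set.Ioi 0) (∏ i ∈ s, z i) := by
  constructor
  · rintro _ ⟨t, ht, rfl⟩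
    exact prod_le_prod hz fun i _ => le_add_of_nonneg_left (inv_pos.2 ht).le
  · intro y hy
    have hlim : Tendsto (fun t : ℝ => ∏ i ∈ s, (t⁻¹ + z i)) atTop (𝓝 (∏ i ∈ s, z i)) := by
      simpa using tendsto_finsetProd s fun i _ => tendsto_inv_atTop_zero.add_const (z i)
    exact ge_of_tendsto hlim ((eventually_gt_atTop 0).mono fun t ht => hy ⟨t, ht, rfl⟩)

theorem rpow_one_sub_mul_pow {c : ℝ} (hc : 0 < c) (m : ℕ) (S : ℝ) :
    c ^ (1 - (m : ℝ)) * ((1 / m : ℝ) * (c * S)) ^ m = c * (S / m) ^ m := by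
  rw [show (1 / m : ℝ) * (c * S) = c * (S / m) by ring, mul_pow, ← mul_assoc,
    ← Real.rpow_natCast c m, ← Real.rpow_add hc, sub_add_cancel, Real.rpow_one]

namespace IsEigen

variable {n m : ℕ} {p : MvPolynomial (Fin n) ℝ} {a x : Fin n → ℝ} {lam : Fin m → ℝ}

theorem eval_eq_s16 (h : IsEigen m p a x lam) : eval x p = eval a p * ∏ k, lam k := by
  simpa using h 0

theorem eval_add_smul_eq_pow_mul (hp : p.IsHomogeneous m) (h : IsEigen m p a x lam) {t : ℝ}
    (ht : t ≠ 0) : eval (a + t • x) p = t ^ m * (eval a p * ∏ k, (t⁻¹ + lam k)) := by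
  rw [← h, ← hp.eval_smul_s16, smul_add, smul_smul, mul_inv_cancel₀ ht, one_smul]

theorem eval_add_smul_div_pow (hp : p.IsHomogeneous m) (h : IsEigen m p a x lam) {t : ℝ}
    (ht : t ≠ 0) : eval (a + t • x) p / t ^ m = eval a p * ∏ k, (t⁻¹ + lam k) := by
  rw [h.eval_add_smul_eq_pow_mul hp ht, mul_div_cancel_left₀ _ (pow_ne_zero m ht)]

theorem eval_add_smul_s16 (hp : p.IsHomogeneous m) (h : IsEigen m p a x lam) (s : ℝ) :
    eval (a + s • x) p = eval a p * ∏ k, (1 + s * lam k) := by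
  rcases eq_or_ne s 0 with rfl | hs
  · simp
  rw [h.eval_add_smul_eq_pow_mul hp hs, mul_left_comm, ← Fin.prod_const, ← prod_mul_distrib]
  simp only [mul_add, mul_inv_cancel₀ hs]

theorem hasDerivAt_eval_add_smul (hp : p.IsHomogeneous m) (h : IsEigen m p a x lam) :
    HasDerivAt (fun s : ℝ => eval (a + s • x) p) (eval a p * ∑ k, lam k) 0 := by
  simp only [h.eval_add_smul_s16 hp]
  refine HasDerivAt.const_mul _ ?_
  simpa using HasDerivAt.fun_finsetProd (u := univ)
    fun k _ => ((hasDerivAt_id (0 : ℝ)).mul_const (lam k)).const_add 1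

theorem dirDeriv_eq (hp : p.IsHomogeneous m) (h : IsEigen m p a x lam) :
    dirDeriv p a x = eval a p * ∑ k, lam k :=
  (h.hasDerivAt_eval_add_smul hp).deriv

theorem exists_eq_of_isEigen (hpa : eval a p ≠ 0) (h : IsEigen m p a x lam) {mu : Fin m → ℝ}
    (h' : IsEigen m p a x mu) (j : Fin m) : ∃ k, mu j = lam k := by
  have hzero : eval a p * ∏ k, (-mu j + lam k) = 0 := by
    rw [← h, h']
    exact mul_eq_zero_of_right _ (prod_eq_zero (mem_univ j) (neg_add_cancel _))
  obtain ⟨k, -, hk⟩ := prod_eq_zero_iff.1 ((mul_eq_zero.1 hzero).resolve_left hpa)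
  exact ⟨k, by linarith⟩

theorem forall_isEigen_eq_iff (hpa : eval a p ≠ 0) (h : IsEigen m p a x lam) :
    (∀ mu : Fin m → ℝ, IsEigen m p a x mu → ∀ j k, mu j = mu k) ↔ ∀ j k, lam j = lam k := by
  refine ⟨fun H => H lam h, fun H mu h' j k => ?_⟩
  obtain ⟨j', hj⟩ := h.exists_eq_of_isEigen hpa h' j
  obtain ⟨k', hk⟩ := h.exists_eq_of_isEigen hpa h' k
  rw [hj, hk, H]

end IsEigen

theorem garding_inequality_general
    {n m : ℕ} (p : MvPolynomial (Fin n) ℝ) (hp : p.IsHomogeneous m)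
    (a : Fin n → ℝ) (hhyp : IsHyperbolic m p a)
    (b : Fin n → ℝ) (hb : b ∈ GardingCone m p a) :
    IsGLB ((fun t : ℝ => eval (a + t • b) p / t ^ m) '' Set.Ioi (0 : ℝ)) (eval b p) ∧
    eval b p ≤ eval a p ^ (1 - (m : ℝ)) * ((1 / m : ℝ) * dirDeriv p a b) ^ m ∧
    (eval b p = eval a p ^ (1 - (m : ℝ)) * ((1 / m : ℝ) * dirDeriv p a b) ^ m ↔
      ∀ lam : Fin m → ℝ, IsEigen m p a b lam → ∀ j k : Fin m, lam j = lam k) := by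
  obtain ⟨hpa, -⟩ := hhyp
  obtain ⟨lam, hlam, hpos⟩ := hb
  have hnonneg : ∀ k ∈ univ, 0 ≤ lam k := fun k _ => (hpos k).le
  have hamgm := prod_le_mean_pow_card univ hnonneg
  have hamgm_eq := prod_eq_mean_pow_card_iff univ hnonneg
  rw [card_fin] at hamgm hamgm_eq
  rw [hlam.dirDeriv_eq hp, rpow_one_sub_mul_pow hpa, hlam.eval_eq_s16]
  refine ⟨?_, mul_le_mul_of_nonneg_left hamgm hpa.le, ?_⟩
  · rw [Set.image_congr fun t ht => hlam.eval_add_smul_div_pow hp (Set.mem_Ioi.1 ht).ne']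
    simpa only [Set.image_image] using (isGLB_image_prod_inv_add univ hnonneg).mul_left hpa.le
  · rw [mul_right_inj' hpa.ne', hamgm_eq, hlam.forall_isEigen_eq_iff hpa.ne']
    simp

/-- Gårding's inequality: for `b ∈ Γ`,
`p(b) = inf_{t>0} p(a + t·b)/tᵐ` and `p(b) ≤ p(a)^{1−m}·((1/m)·p′_b(a))ᵐ`,
with equality iff all the `a`-eigenvalues of `b` are equal. -/
theorem garding_inequality
    {n m : ℕ} (hm : 1 ≤ m) (p : MvPolynomial (Fin n) ℝ) (hp : p.IsHomogeneous m)
    (a : Fin n → ℝ) (hhyp : IsHyperbolic m p a)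
    (b : Fin n → ℝ) (hb : b ∈ GardingCone m p a) :
    IsGLB ((fun t : ℝ => eval (a + t • b) p / t ^ m) '' Set.Ioi (0 : ℝ)) (eval b p) ∧
    eval b p ≤ eval a p ^ (1 - (m : ℝ)) * ((1 / m : ℝ) * dirDeriv p a b) ^ m ∧
    (eval b p = eval a p ^ (1 - (m : ℝ)) * ((1 / m : ℝ) * dirDeriv p a b) ^ m ↔
      ∀ lam : Fin m → ℝ, IsEigen m p a b lam → ∀ j k : Fin m, lam j = lam k) :=
  garding_inequality_general p hp a hhyp b hb
end
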